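/- Let k ≥ 4 be even and l even with k/2 < l < k and l not dividing k, and let a > γ_{lk} where γ_{lk} is the Kohn-Nirenberg constant. Then the function P(z) = |z|^k + a|z|^{k-l} Re(z^l) is not convex on ℂ ≅ ℝ²; i.e. there exists a point z₀ ≠ 0 at which the real Hessian of P has a negative eigenvalue. -/

import Mathlib

/-!
On the vertical line `z = 1 + t * I` we have `‖z‖ ^ 2 = 1 + t ^ 2`, so `P` restricts to
`φ t = (1 + t ^ 2) ^ (k / 2) + a * (1 + t ^ 2) ^ ((k - l) / 2) * Re ((1 + t * I) ^ l)`,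
whose second derivative at `0` is `k + a * (k - l ^ 2)`. Evenness together with `k / 2 < l`
forces `3 * k - 2 ≤ l ^ 2`, so `γ = k / (l ^ 2 - k)`, and `a > γ` makes `φ'' 0 < 0`,
which is impossible for a convex function.
-/

open Set Complex

theorem three_mul_le_sq_add_two {k l : ℕ} (hk : Even k) (hl : Even l) (hkl : k / 2 < l)
    (hlk : l < k) : 3 * k ≤ l ^ 2 + 2 := by
  obtain ⟨m, rfl⟩ := hk
  obtain ⟨i, rfl⟩ := hl
  have hi : 2 ≤ i := by omega
  have hm : m + 1 ≤ 2 * i := by omega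
  nlinarith

theorem ConvexOn.comp_add_smul {E : Type*} [AddCommGroup E] [Module ℝ E] {f : E → ℝ}
    (hf : ConvexOn ℝ univ f) (x v : E) : ConvexOn ℝ univ (fun t : ℝ => f (x + t • v)) := by
  simpa [Function.comp_def, AffineMap.lineMap_apply_module', add_comm] using
    hf.comp_affineMap (AffineMap.lineMap x (x + v))

theorem ConvexOn.nonneg_of_hasDerivAt_of_hasDerivAt {f f' : ℝ → ℝ} {f'' x : ℝ}
    (hf : ConvexOn ℝ univ f) (hf' : ∀ t, HasDerivAt f (f' t) t) (hf'' : HasDerivAt f' f'' x) :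
    0 ≤ f'' := by
  have hderiv : deriv f = f' := funext fun t => (hf' t).deriv
  have hmono := hf.monotoneOn_deriv fun t _ => (hf' t).differentiableAt
  rw [hderiv, monotoneOn_univ] at hmono
  exact hf''.nonneg_of_monotone hmono

section SecondDerivative

variable {𝕜 𝔸 : Type*} [NontriviallyNormedField 𝕜] [NormedCommRing 𝔸] [NormedAlgebra 𝕜 𝔸]

theorem HasDerivAt.second_mul {u v u' v' : 𝕜 → 𝔸} {u'' v'' : 𝔸} {x : 𝕜}
    (hu' : HasDerivAt u' u'' x) (hv' : HasDerivAt v' v'' x) (hu : HasDerivAt u (u' x) x)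
    (hv : HasDerivAt v (v' x) x) :
    HasDerivAt (fun t => u' t * v t + u t * v' t)
      (u'' * v x + 2 * (u' x * v' x) + u x * v'') x :=
  ((hu'.fun_mul hv).add (hu.fun_mul hv')).congr_deriv (by ring)

theorem hasDerivAt_one_add_mul_pow (c : 𝕜) (p : ℕ) (w : 𝕜) :
    HasDerivAt (fun w => (1 + w * c) ^ p) (p * (1 + w * c) ^ (p - 1) * c) w := by
  simpa using (((hasDerivAt_id w).mul_const c).const_add 1).fun_pow p

theorem hasDerivAt_deriv_one_add_mul_pow_zero (c : 𝕜) (p : ℕ) :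
    HasDerivAt (fun w => p * (1 + w * c) ^ (p - 1) * c) (p * (p - 1) * c ^ 2) 0 := by
  rcases p with _ | p
  · simpa using hasDerivAt_const (0 : 𝕜) (0 : 𝕜)
  · simp only [Nat.add_sub_cancel]
    refine (((hasDerivAt_one_add_mul_pow c p 0).const_mul ((p + 1 : ℕ) : 𝕜)).mul_const c
      ).congr_deriv ?_
    simp only [Nat.cast_add, Nat.cast_one, zero_mul, add_zero, one_pow, mul_one,
      add_sub_cancel_right]
    ring

theorem hasDerivAt_one_add_sq_pow (p : ℕ) (w : 𝕜) :
    HasDerivAt (fun w => (1 + w ^ 2) ^ p) (p * (1 + w ^ 2) ^ (p - 1) * (2 * w)) w := by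
  simpa using ((hasDerivAt_pow 2 w).const_add 1).fun_pow p

theorem hasDerivAt_deriv_one_add_sq_pow_zero (p : ℕ) :
    HasDerivAt (fun w : 𝕜 => p * (1 + w ^ 2) ^ (p - 1) * (2 * w)) (2 * p : 𝕜) 0 := by
  refine ((hasDerivAt_one_add_sq_pow (p - 1) (0 : 𝕜) |>.const_mul (p : 𝕜)).fun_mul
    ((hasDerivAt_id (0 : 𝕜)).const_mul 2)).congr_deriv ?_
  simp only [ne_eq, OfNat.ofNat_ne_zero, not_false_eq_true, zero_pow, add_zero, one_pow, mul_one,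
    mul_zero, id_eq, zero_add]
  ring

end SecondDerivative

theorem exists_hasDerivAt_one_add_sq_pow_mul_re (n l : ℕ) :
    ∃ ψ' : ℝ → ℝ,
      (∀ t : ℝ, HasDerivAt (fun t : ℝ => (1 + t ^ 2) ^ n * ((1 + t * I) ^ l).re) (ψ' t) t) ∧
      HasDerivAt ψ' (2 * n + l - l ^ 2) 0 := by
  have hre : (fun t : ℝ => (1 + t ^ 2) ^ n * ((1 + t * I) ^ l).re) =
      fun t : ℝ => ((1 + (t : ℂ) ^ 2) ^ n * (1 + t * I) ^ l).re := by
    funext t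
    rw [← re_ofReal_mul]
    push_cast
    rfl
  rw [hre]
  refine ⟨fun t => (n * (1 + (t : ℂ) ^ 2) ^ (n - 1) * (2 * t) * (1 + t * I) ^ l +
    (1 + (t : ℂ) ^ 2) ^ n * (l * (1 + t * I) ^ (l - 1) * I)).re, fun t => ?_, ?_⟩
  · exact ((hasDerivAt_one_add_sq_pow n (t : ℂ)).mul
      (hasDerivAt_one_add_mul_pow I l (t : ℂ))).real_of_complex
  · have hF'' := (hasDerivAt_deriv_one_add_sq_pow_zero n).second_mul
      (hasDerivAt_deriv_one_add_mul_pow_zero I l) (hasDerivAt_one_add_sq_pow n (0 : ℂ))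
      (hasDerivAt_one_add_mul_pow I l 0)
    convert hF''.real_of_complex using 1
    simp only [zero_mul, add_zero, one_pow, mul_one, ne_eq, OfNat.ofNat_ne_zero,
      not_false_eq_true, zero_pow, mul_zero, I_sq, mul_neg, one_mul, add_re, mul_re, re_ofNat,
      natCast_re, im_ofNat, natCast_im, sub_zero, neg_re, sub_re, one_re, sub_im, one_im,
      sub_self]
    ring

theorem norm_one_add_mul_I_pow_two_mul (n : ℕ) (t : ℝ) :
    ‖1 + t * I‖ ^ (2 * n) = (1 + t ^ 2) ^ n := by
  rw [pow_mul, Complex.sq_norm, ← ofReal_one, normSq_add_mul_I, one_pow]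

theorem stmt_13_general (k l : ℕ) (hk : Even k) (hl : Even l)
    (hl1 : k / 2 < l) (hl2 : l < k)
    (γ : ℝ)
    (hγ : γ = if 3 * (k : ℝ) - 2 ≤ (l : ℝ) ^ 2 then (k : ℝ) / ((l : ℝ) ^ 2 - k)
      else Real.sqrt ((4 * (k : ℝ) - (l : ℝ) ^ 2 - 4) * (k : ℝ) ^ 2 /
        ((4 * (k : ℝ) - 4) * ((k : ℝ) ^ 2 - (l : ℝ) ^ 2))))
    (a : ℝ) (ha : γ < a) :
    ¬ ConvexOn ℝ Set.univ
      (fun z : ℂ => ‖z‖ ^ k +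
        a * ‖z‖ ^ (k - l) * (z ^ l).re) := by
  have hkl : (3 * k : ℝ) - 2 ≤ l ^ 2 := by
    have := three_mul_le_sq_add_two hk hl hl1 hl2
    rify at this
    linarith
  have hk1 : (1 : ℝ) < k := by exact_mod_cast (show 1 < k by omega)
  rw [if_pos hkl] at hγ
  rw [hγ, div_lt_iff₀ (by linarith)] at ha
  obtain ⟨m, hm⟩ := hk.two_dvd
  obtain ⟨n, hn⟩ := ((Nat.even_sub hl2.le).mpr (iff_of_true hk hl)).two_dvd
  have hkm : (k : ℝ) = 2 * m := by exact_mod_cast hm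
  have hkn : (k : ℝ) - l = 2 * n := by rw [← Nat.cast_sub hl2.le, hn]; push_cast; ring
  obtain ⟨ψ, hψ, hψ0⟩ := exists_hasDerivAt_one_add_sq_pow_mul_re n l
  intro hP
  have hline := hP.comp_add_smul 1 I
  rw [hn, hm] at hline
  simp only [Complex.real_smul, norm_one_add_mul_I_pow_two_mul, mul_assoc] at hline
  have hφ'' := hline.nonneg_of_hasDerivAt_of_hasDerivAt
    (fun t => (hasDerivAt_one_add_sq_pow m t).add ((hψ t).const_mul a))
    ((hasDerivAt_deriv_one_add_sq_pow_zero m).add (hψ0.const_mul a))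
  rw [← hkm, ← hkn] at hφ''
  linarith

/-- For even `k ≥ 4`, even `l` with `k/2 < l < k` and `l ∤ k`,
and `a > γ_{lk}`, the function `P(z) = |z|^k + a|z|^{k-l} Re(z^l)` is not
convex on `ℂ ≅ ℝ²`. -/
theorem stmt_13 (k l : ℕ) (hk : Even k) (hk4 : 4 ≤ k) (hl : Even l)
    (hl1 : k / 2 < l) (hl2 : l < k) (hnd : ¬ l ∣ k)
    (γ : ℝ)
    (hγ : γ = if 3 * (k : ℝ) - 2 ≤ (l : ℝ) ^ 2 then (k : ℝ) / ((l : ℝ) ^ 2 - k)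
      else Real.sqrt ((4 * (k : ℝ) - (l : ℝ) ^ 2 - 4) * (k : ℝ) ^ 2 /
        ((4 * (k : ℝ) - 4) * ((k : ℝ) ^ 2 - (l : ℝ) ^ 2))))
    (a : ℝ) (ha : γ < a) :
    ¬ ConvexOn ℝ Set.univ
      (fun z : ℂ => ‖z‖ ^ k +
        a * ‖z‖ ^ (k - l) * (z ^ l).re) :=
  stmt_13_general k l hk hl hl1 hl2 γ hγ a ha
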